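/- For every speed c with 0 < c < 2√α, there is no monotone traveling wave solution of (TW) with speed c; that is, there is no traveling wave solution (u, v) of (TW) with speed c such that both u and v are monotonically increasing on ℝ. -/

import Mathlib

open Filter

/-- The equilibrium value `K* = (1 - α)/(1 - k + αk)`. -/
noncomputable def Kstar (α k : ℝ) : ℝ := (1 - α) / (1 - k + α * k)

/-- A traveling wave solution of system (TW) with speed `c`. -/
def IsTravelingWave (α k c : ℝ) (u v : ℝ → ℝ) : Prop :=
  ContDiff ℝ 2 u ∧ ContDiff ℝ 2 v ∧
  (∀ ξ : ℝ, deriv (deriv u) ξ - c * deriv u ξ -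
      (Kstar α k - u ξ) *
        (1 - α - (Kstar α k - u ξ + v ξ) / (1 + k * (Kstar α k - u ξ))) = 0) ∧
  (∀ ξ : ℝ, deriv (deriv v) ξ - c * deriv v ξ +
      v ξ * (1 - (Kstar α k - u ξ + v ξ) / (1 + k * (Kstar α k - u ξ))) = 0) ∧
  Tendsto u atBot (nhds 0) ∧ Tendsto v atBot (nhds 0) ∧
  Tendsto u atTop (nhds (Kstar α k)) ∧ Tendsto v atTop (nhds 1)

/-! Since `u` and `v` are monotone, `0 ≤ u ≤ K*` and `0 ≤ v ≤ 1`, and then the per-capita growth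
rate of `v` is at least `α - v`. Far to the left `v` is small, so there `v ≥ 0` satisfies
`v'' - c v' + β v ≤ 0` for some `β > c² / 4` (this is where `c < 2√α` enters). Sturm comparison
with the oscillating solutions of `φ'' - c φ' + β φ = 0` forces such a `v` to vanish at the right
end of every interval of length `π / √(β - c² / 4)` in that region, while by the intermediate
value theorem `v` takes small positive values there. -/

open Set Real

theorem exists_pos_lt_of_tendsto {X : Type*} [TopologicalSpace X] [PreconnectedSpace X]
    {l₁ l₂ : Filter X} [l₁.NeBot] [l₂.NeBot] {f : X → ℝ} {l ε : ℝ} (hf : Continuous f)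
    (h₁ : Tendsto f l₁ (nhds 0)) (h₂ : Tendsto f l₂ (nhds l)) (hl : 0 < l) (hε : 0 < ε) :
    ∃ x, 0 < f x ∧ f x < ε := by
  have ht : 0 < min ε l / 2 := by positivity
  have htε : min ε l / 2 < ε := by linarith [min_le_left ε l]
  have htl : min ε l / 2 < l := by linarith [min_le_right ε l]
  obtain ⟨x, hx⟩ := mem_range_of_exists_le_of_exists_ge hf
    (h₁.eventually (ge_mem_nhds ht)).exists (h₂.eventually (le_mem_nhds htl)).exists
  exact ⟨x, hx ▸ ht, hx ▸ htε⟩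

theorem hasDerivAt_sturm_wronskian {v v' v'' : ℝ → ℝ} {c ω a x : ℝ}
    (hv : HasDerivAt v (v' x) x) (hv' : HasDerivAt v' (v'' x) x) :
    HasDerivAt (fun x ↦ exp (-(c / 2 * x)) *
        ((c / 2 * sin (ω * (x - a)) + ω * cos (ω * (x - a))) * v x - sin (ω * (x - a)) * v' x))
      (-(exp (-(c / 2 * x)) * sin (ω * (x - a))) *
        (v'' x - c * v' x + (c ^ 2 / 4 + ω ^ 2) * v x)) x := by
  have hθ : HasDerivAt (fun x ↦ ω * (x - a)) ω x := by
    simpa using ((hasDerivAt_id x).sub_const a).const_mul ω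
  have hE : HasDerivAt (fun x ↦ exp (-(c / 2 * x))) (-(c / 2) * exp (-(c / 2 * x))) x := by
    simpa [mul_comm] using ((hasDerivAt_id x).const_mul (c / 2)).neg.exp
  have := hE.mul ((((hθ.sin.const_mul (c / 2)).add (hθ.cos.const_mul ω)).mul hv).sub
    (hθ.sin.mul hv'))
  exact this.congr_deriv (by simp only [Pi.add_apply, Pi.sub_apply, Pi.mul_apply]; ring)

/-- Sturm comparison: `Z` is `exp (-c x) (φ' v - φ v')` for `φ x = exp (c x / 2) sin (ω (x - a))`,
which solves `φ'' - c φ' + (c² / 4 + ω²) φ = 0` and is positive on `(a, b)`. -/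
theorem eq_zero_of_supersolution_of_nonneg {v v' v'' : ℝ → ℝ} {c ω b : ℝ} (hω : 0 < ω)
    (hv : ∀ x, HasDerivAt v (v' x) x) (hv' : ∀ x, HasDerivAt v' (v'' x) x)
    (hsuper : ∀ x ∈ Icc (b - π / ω) b, v'' x - c * v' x + (c ^ 2 / 4 + ω ^ 2) * v x ≤ 0)
    (hnonneg : ∀ x ∈ Icc (b - π / ω) b, 0 ≤ v x) :
    v b = 0 := by
  set a := b - π / ω
  have hab : a ≤ b := by have := div_pos pi_pos hω; linarith
  have hπ : ω * (b - a) = π := by simp only [a]; field_simp; ring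
  set Z := fun x ↦ exp (-(c / 2 * x)) *
    ((c / 2 * sin (ω * (x - a)) + ω * cos (ω * (x - a))) * v x - sin (ω * (x - a)) * v' x)
  have hZ : ∀ x, HasDerivAt Z _ x := fun x ↦ hasDerivAt_sturm_wronskian (hv x) (hv' x)
  have hZ_mono : MonotoneOn Z (Icc a b) := by
    refine monotoneOn_of_deriv_nonneg (convex_Icc a b)
      (HasDerivAt.continuousOn fun x _ ↦ hZ x)
      (fun x _ ↦ (hZ x).differentiableAt.differentiableWithinAt) fun x hx ↦ ?_
    rw [interior_Icc] at hx
    have hsin : 0 ≤ sin (ω * (x - a)) := sin_nonneg_of_nonneg_of_le_pi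
      (mul_nonneg hω.le (by linarith [hx.1])) (hπ ▸ by gcongr; exact hx.2.le)
    rw [(hZ x).deriv]
    exact mul_nonneg_of_nonpos_of_nonpos (neg_nonpos.2 (mul_nonneg (exp_pos _).le hsin))
      (hsuper x (Ioo_subset_Icc_self hx))
  have hZab := hZ_mono (left_mem_Icc.2 hab) (right_mem_Icc.2 hab) hab
  have hva := hnonneg a (left_mem_Icc.2 hab)
  have hvb := hnonneg b (right_mem_Icc.2 hab)
  simp only [Z, sub_self, mul_zero, sin_zero, cos_zero, hπ, sin_pi, cos_pi] at hZab
  refine le_antisymm ?_ hvb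
  nlinarith [mul_nonneg (mul_nonneg hω.le (exp_pos (-(c / 2 * a))).le) hva,
    mul_pos hω (exp_pos (-(c / 2 * b)))]

theorem sub_le_one_sub_div_of_le_Kstar {α k w v : ℝ} (hk : 0 ≤ k) (hd : 0 < 1 - k + α * k)
    (hw : 0 ≤ w) (hwK : w ≤ Kstar α k) (hv : 0 ≤ v) :
    α - v ≤ 1 - (w + v) / (1 + k * w) := by
  have hK : Kstar α k * (1 - k + α * k) = 1 - α := div_mul_cancel₀ _ hd.ne'
  have hw' : w * (1 - k + α * k) ≤ 1 - α := hK ▸ mul_le_mul_of_nonneg_right hwK hd.le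
  have hdiv : (w + v) / (1 + k * w) ≤ 1 - α + v := by
    rw [div_le_iff₀ (by positivity)]
    nlinarith [mul_nonneg hv (mul_nonneg hk hw)]
  linarith

theorem no_monotone_wave_below_critical_speed_general
    (α k : ℝ) (hα : 0 < α) (hk : 0 < k) (hk1 : k < 1)
    (c : ℝ) (hc0 : 0 < c) (hc : c < 2 * Real.sqrt α) :
    ¬ ∃ u v : ℝ → ℝ, IsTravelingWave α k c u v ∧ Monotone u ∧ Monotone v := by
  rintro ⟨u, v, ⟨-, hv, -, hveq, hu_bot, hv_bot, hu_top, hv_top⟩, hu, hv_mono⟩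
  have hc2 : c ^ 2 / 4 < α := by
    have := (lt_sqrt (by positivity)).1 (show c / 2 < √α by linarith)
    linarith
  obtain ⟨ω, hω, hωα⟩ : ∃ ω > 0, c ^ 2 / 4 + ω ^ 2 < α :=
    ⟨√((α - c ^ 2 / 4) / 2), sqrt_pos.2 (by linarith), by rw [sq_sqrt (by linarith)]; linarith⟩
  obtain ⟨ξ₀, hξ₀_pos, hξ₀_lt⟩ :=
    exists_pos_lt_of_tendsto hv.continuous hv_bot hv_top one_pos (sub_pos.2 hωα)
  have hsuper : ∀ x ∈ Icc (ξ₀ - π / ω) ξ₀,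
      deriv (deriv v) x - c * deriv v x + (c ^ 2 / 4 + ω ^ 2) * v x ≤ 0 := by
    rintro x ⟨-, hx⟩
    have hvx := hv_mono.le_of_tendsto hv_bot x
    have hrate := sub_le_one_sub_div_of_le_Kstar hk.le (by nlinarith) (sub_nonneg.2
      (hu.ge_of_tendsto hu_top x)) (sub_le_self _ (hu.le_of_tendsto hu_bot x)) hvx
    nlinarith [hveq x, hv_mono hx]
  exact hξ₀_pos.ne' <| eq_zero_of_supersolution_of_nonneg hω
    (fun x ↦ (hv.differentiable (by norm_num) x).hasDerivAt)
    (fun x ↦ (hv.differentiable_deriv_two x).hasDerivAt) hsuper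
    (fun x _ ↦ hv_mono.le_of_tendsto hv_bot x)

theorem no_monotone_wave_below_critical_speed
    (α k : ℝ) (hα : 0 < α) (hα1 : α < 1) (hk : 0 < k) (hk1 : k < 1)
    (c : ℝ) (hc0 : 0 < c) (hc : c < 2 * Real.sqrt α) :
    ¬ ∃ u v : ℝ → ℝ, IsTravelingWave α k c u v ∧ Monotone u ∧ Monotone v :=
  no_monotone_wave_below_critical_speed_general α k hα hk hk1 c hc0 hc
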